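/- arXiv:2104.06078 — 3 statements merged into one kernel-verified Lean document; each statement's English description precedes it below -/
import Mathlib

section
/- The function J₁(v,p,e) = ((cp − ve)(c − v))/((cp + ve)(c + v)) is an invariant of the infinitesimal generator X of the one-parameter reciprocal transformations: applying X to J₁ gives zero, i.e., −pv·∂J₁/∂v − p²·∂J₁/∂p + (c²p² − e²v²)Γ²·∂J₁/∂e = 0, where Γ² = 1/(c² − v²). -/
/-!
Factor `J₁ = A · B` with `A = (cp − ve)/(cp + ve)` and `B = (c − v)/(c + v)`. Both are ratios
`(a − b)/(a + b)`, whose derivative is `2(a'b − ab')/(a + b)²`. The `∂ᵥA` and `∂ₚA` terms of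
`X J₁` cancel outright, and the remaining two, `−pv · A · ∂ᵥB` and the `∂ₑ` term, cancel because
`(c²p² − e²v²)/(c² − v²) = (cp − ve)(cp + ve)/((c − v)(c + v))`.
-/

/-- The invariant J₁ of the 1+1-dimensional reciprocal transformation. -/
noncomputable def J1 (c v p e : ℝ) : ℝ :=
  ((c * p - v * e) * (c - v)) / ((c * p + v * e) * (c + v))

theorem HasDerivAt.sub_div_add {𝕜 : Type*} [NontriviallyNormedField 𝕜] {f g : 𝕜 → 𝕜}
    {f' g' x : 𝕜} (hf : HasDerivAt f f' x) (hg : HasDerivAt g g' x) (h : f x + g x ≠ 0) :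
    HasDerivAt (fun y => (f y - g y) / (f y + g y)) (2 * (f' * g x - f x * g') / (f x + g x) ^ 2)
      x :=
  ((hf.fun_sub hg).fun_div (hf.fun_add hg) h).congr_deriv (by ring)

theorem J1_eq_mul (c v p e : ℝ) :
    J1 c v p e = (c * p - v * e) / (c * p + v * e) * ((c - v) / (c + v)) :=
  (div_mul_div_comm _ _ _ _).symm

section PartialDerivatives

variable {c v p e : ℝ}

theorem deriv_J1_v (hS : c * p + v * e ≠ 0) (hplus : c + v ≠ 0) :
    deriv (fun v' => J1 c v' p e) v =
      -2 * c * p * e / (c * p + v * e) ^ 2 * ((c - v) / (c + v))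
        + (c * p - v * e) / (c * p + v * e) * (-2 * c / (c + v) ^ 2) := by
  have hA : HasDerivAt (fun v' => (c * p - v' * e) / (c * p + v' * e))
      (-2 * c * p * e / (c * p + v * e) ^ 2) v :=
    ((hasDerivAt_const v (c * p)).sub_div_add ((hasDerivAt_id' v).mul_const e) hS)
      |>.congr_deriv (by ring)
  have hB : HasDerivAt (fun v' => (c - v') / (c + v')) (-2 * c / (c + v) ^ 2) v :=
    ((hasDerivAt_const v c).sub_div_add (hasDerivAt_id' v) hplus)
      |>.congr_deriv (by ring)
  simp only [J1_eq_mul]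
  exact (hA.mul hB).deriv

theorem deriv_J1_p (hS : c * p + v * e ≠ 0) :
    deriv (fun p' => J1 c v p' e) p =
      2 * c * v * e / (c * p + v * e) ^ 2 * ((c - v) / (c + v)) := by
  have hA : HasDerivAt (fun p' => (c * p' - v * e) / (c * p' + v * e))
      (2 * c * v * e / (c * p + v * e) ^ 2) p :=
    (((hasDerivAt_id' p).const_mul c).sub_div_add (hasDerivAt_const p (v * e)) hS)
      |>.congr_deriv (by ring)
  simp only [J1_eq_mul]
  exact (hA.mul_const _).deriv

theorem deriv_J1_e (hS : c * p + v * e ≠ 0) :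
    deriv (fun e' => J1 c v p e') e =
      -2 * c * p * v / (c * p + v * e) ^ 2 * ((c - v) / (c + v)) := by
  have hA : HasDerivAt (fun e' => (c * p - v * e') / (c * p + v * e'))
      (-2 * c * p * v / (c * p + v * e) ^ 2) e :=
    ((hasDerivAt_const e (c * p)).sub_div_add ((hasDerivAt_id' e).const_mul v) hS)
      |>.congr_deriv (by ring)
  simp only [J1_eq_mul]
  exact (hA.mul_const _).deriv

end PartialDerivatives

theorem J1_invariant_general (c v p e : ℝ) (hv : |v| < c)
    (hden : (c * p + v * e) * (c + v) ≠ 0) :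
    -(p * v) * deriv (fun v' => J1 c v' p e) v
      - p ^ 2 * deriv (fun p' => J1 c v p' e) p
      + (c ^ 2 * p ^ 2 - e ^ 2 * v ^ 2) * (1 / (c ^ 2 - v ^ 2)) *
        deriv (fun e' => J1 c v p e') e = 0 := by
  obtain ⟨hS, hplus⟩ := mul_ne_zero_iff.mp hden
  have hminus : c - v ≠ 0 := (sub_pos.mpr (abs_lt.mp hv).2).ne'
  rw [deriv_J1_v hS hplus, deriv_J1_p hS, deriv_J1_e hS,
    show c ^ 2 - v ^ 2 = (c + v) * (c - v) by ring]
  field_simp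
  ring

theorem J1_invariant (c v p e : ℝ) (hc : 0 < c) (hv : |v| < c)
    (hden : (c * p + v * e) * (c + v) ≠ 0) :
    -(p * v) * deriv (fun v' => J1 c v' p e) v
      - p ^ 2 * deriv (fun p' => J1 c v p' e) p
      + (c ^ 2 * p ^ 2 - e ^ 2 * v ^ 2) * (1 / (c ^ 2 - v ^ 2)) *
        deriv (fun e' => J1 c v p e') e = 0 :=
  J1_invariant_general c v p e hv hden
end

section
/- The function J₂(ρ,v,p,e) = (ρp/(cp + ev))·√((c−v)/(c+v)) satisfies XJ₂ = 0, where X = −ρv²eΓ²∂ρ − pv∂v − p²∂p + (c²p² − e²v²)Γ²∂e and Γ² = 1/(c²−v²). -/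
/-! The factor `√((c - v)/(c + v))` of `J₂` has logarithmic derivative `-c/(c² - v²)`, and the
other three variables enter `J₂` rationally. Substituting the four partial derivatives, the
factor `√((c - v)/(c + v))` drops out of `XJ₂` and what is left is a rational identity in
`c, ρ, v, p, e`. -/

/-- The invariant J₂ of the 1+1-dimensional reciprocal transformation. -/
noncomputable def J2 (c ρ v p e : ℝ) : ℝ :=
  (ρ * p / (c * p + e * v)) * Real.sqrt ((c - v) / (c + v))

noncomputable def dopplerFactor (c v : ℝ) : ℝ :=
  Real.sqrt ((c - v) / (c + v))

theorem hasDerivAt_dopplerFactor {c v : ℝ} (hv : |v| < c) :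
    HasDerivAt (dopplerFactor c) (-c * dopplerFactor c v / (c ^ 2 - v ^ 2)) v := by
  obtain ⟨hv₁, hv₂⟩ := abs_lt.mp hv
  have hplus : 0 < c + v := by linarith
  have hratio : 0 < (c - v) / (c + v) := div_pos (by linarith) hplus
  have hsq : dopplerFactor c v ^ 2 = (c - v) / (c + v) := Real.sq_sqrt hratio.le
  have hpos : 0 < dopplerFactor c v := Real.sqrt_pos.mpr hratio
  have hlorentz : c ^ 2 - v ^ 2 ≠ 0 := by nlinarith
  have hquot : HasDerivAt (fun v' => (c - v') / (c + v'))
      ((-1 * (c + v) - (c - v) * 1) / (c + v) ^ 2) v :=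
    ((hasDerivAt_id v).const_sub c).fun_div ((hasDerivAt_id v).const_add c) hplus.ne'
  refine (hquot.sqrt hratio.ne').congr_deriv ?_
  change _ / (2 * dopplerFactor c v) = _
  field_simp
  rw [hsq]
  field_simp
  ring

section PartialDerivatives

variable {c ρ v p e : ℝ}

theorem hasDerivAt_J2_rho :
    HasDerivAt (fun ρ' => J2 c ρ' v p e) (p / (c * p + e * v) * dopplerFactor c v) ρ :=
  ((((hasDerivAt_id ρ).mul_const p).div_const (c * p + e * v)).mul_const
    (dopplerFactor c v)).congr_deriv (by simp)

theorem hasDerivAt_J2_p (hden : c * p + e * v ≠ 0) :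
    HasDerivAt (fun p' => J2 c ρ v p' e)
      (ρ * e * v / (c * p + e * v) ^ 2 * dopplerFactor c v) p :=
  ((((hasDerivAt_id p).const_mul ρ).fun_div
    (((hasDerivAt_id p).const_mul c).add_const (e * v)) hden).mul_const
    (dopplerFactor c v)).congr_deriv (by simp only [id_eq]; ring)

theorem hasDerivAt_J2_e (hden : c * p + e * v ≠ 0) :
    HasDerivAt (fun e' => J2 c ρ v p e')
      (-(ρ * p * v) / (c * p + e * v) ^ 2 * dopplerFactor c v) e :=
  (((hasDerivAt_const e (ρ * p)).fun_div
    (((hasDerivAt_id e).mul_const v).const_add (c * p)) hden).mul_const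
    (dopplerFactor c v)).congr_deriv (by simp only [id_eq]; ring)

theorem hasDerivAt_J2_v (hv : |v| < c) (hden : c * p + e * v ≠ 0) :
    HasDerivAt (fun v' => J2 c ρ v' p e)
      (-(ρ * p * e) / (c * p + e * v) ^ 2 * dopplerFactor c v
        + ρ * p / (c * p + e * v) * (-c * dopplerFactor c v / (c ^ 2 - v ^ 2))) v :=
  (((hasDerivAt_const v (ρ * p)).fun_div
    (((hasDerivAt_id v).const_mul e).const_add (c * p)) hden).fun_mul
    (hasDerivAt_dopplerFactor hv)).congr_deriv (by simp only [id_eq]; ring)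

end PartialDerivatives

theorem J2_invariant_general (c ρ v p e : ℝ) (hv : |v| < c)
    (hden : c * p + e * v ≠ 0) :
    -(ρ * v ^ 2 * e) * (1 / (c ^ 2 - v ^ 2)) * deriv (fun ρ' => J2 c ρ' v p e) ρ
      - p * v * deriv (fun v' => J2 c ρ v' p e) v
      - p ^ 2 * deriv (fun p' => J2 c ρ v p' e) p
      + (c ^ 2 * p ^ 2 - e ^ 2 * v ^ 2) * (1 / (c ^ 2 - v ^ 2)) *
        deriv (fun e' => J2 c ρ v p e') e = 0 := by
  rw [hasDerivAt_J2_rho.deriv, (hasDerivAt_J2_v hv hden).deriv, (hasDerivAt_J2_p hden).deriv,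
    (hasDerivAt_J2_e hden).deriv]
  have hlorentz : c ^ 2 - v ^ 2 ≠ 0 := by nlinarith [abs_lt.mp hv]
  field_simp
  ring

theorem J2_invariant (c ρ v p e : ℝ) (hc : 0 < c) (hv : |v| < c)
    (hden : c * p + e * v ≠ 0) :
    -(ρ * v ^ 2 * e) * (1 / (c ^ 2 - v ^ 2)) * deriv (fun ρ' => J2 c ρ' v p e) ρ
      - p * v * deriv (fun v' => J2 c ρ v' p e) v
      - p ^ 2 * deriv (fun p' => J2 c ρ v p' e) p
      + (c ^ 2 * p ^ 2 - e ^ 2 * v ^ 2) * (1 / (c ^ 2 - v ^ 2)) *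
        deriv (fun e' => J2 c ρ v p e') e = 0 :=
  J2_invariant_general c ρ v p e hv hden
end

section
/- The function J₃(u,v,p,e) = ((cp − eq)(c − q))/((cp + eq)(c + q)), where q = √(u²+v²), is annihilated by the vector field X = −ρeq²Γ²∂ρ − pu∂u − pv∂v − p²∂p + (c²p² − e²q²)Γ²∂e, with Γ² = 1/(c²−q²). -/
/-!
J₃ depends on `(u, v)` only through the speed `q = √(u² + v²)`, say `J₃ = F(q, p, e)`, and
Euler's relation `u ∂ᵤq + v ∂ᵥq = q` turns `X J₃` into
`-p q ∂_q F - p² ∂_p F + (c²p² - e²q²) Γ² ∂_e F`. All three partials of `F` are explicit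
multiples of `2c / ((cp + eq)(c + q))²`, and the combination cancels identically.
-/

/-- The invariant J₃ of the two-dimensional reciprocal transformation. -/
noncomputable def J3 (c u v p e : ℝ) : ℝ :=
  ((c * p - e * Real.sqrt (u ^ 2 + v ^ 2)) * (c - Real.sqrt (u ^ 2 + v ^ 2))) /
    ((c * p + e * Real.sqrt (u ^ 2 + v ^ 2)) * (c + Real.sqrt (u ^ 2 + v ^ 2)))

noncomputable def J3Speed (c q p e : ℝ) : ℝ :=
  ((c * p - e * q) * (c - q)) / ((c * p + e * q) * (c + q))

theorem J3_eq_J3Speed (c u v p e : ℝ) : J3 c u v p e = J3Speed c √(u ^ 2 + v ^ 2) p e := rfl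

section

variable {c q p e : ℝ}

theorem hasDerivAt_J3Speed_p (hB : (c * p + e * q) * (c + q) ≠ 0) :
    HasDerivAt (fun p => J3Speed c q p e)
      (2 * c * e * q * (c ^ 2 - q ^ 2) / ((c * p + e * q) * (c + q)) ^ 2) p := by
  have hN := (((hasDerivAt_id' p).const_mul c).sub_const (e * q)).mul_const (c - q)
  have hD := (((hasDerivAt_id' p).const_mul c).add_const (e * q)).mul_const (c + q)
  exact (hN.div hD hB).congr_deriv (by ring)

theorem hasDerivAt_J3Speed_e (hB : (c * p + e * q) * (c + q) ≠ 0) :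
    HasDerivAt (fun e => J3Speed c q p e)
      (-2 * c * p * q * (c ^ 2 - q ^ 2) / ((c * p + e * q) * (c + q)) ^ 2) e := by
  have hN := (((hasDerivAt_id' e).mul_const q).const_sub (c * p)).mul_const (c - q)
  have hD := (((hasDerivAt_id' e).mul_const q).const_add (c * p)).mul_const (c + q)
  exact (hN.div hD hB).congr_deriv (by ring)

theorem hasDerivAt_J3Speed_q (hB : (c * p + e * q) * (c + q) ≠ 0) :
    HasDerivAt (fun q => J3Speed c q p e)
      (-2 * c * (c ^ 2 * p ^ 2 - e ^ 2 * q ^ 2 + p * e * (c ^ 2 - q ^ 2)) /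
        ((c * p + e * q) * (c + q)) ^ 2) q := by
  have hN : HasDerivAt (fun q => (c * p - e * q) * (c - q)) (-e * (c - q) - (c * p - e * q)) q :=
    ((((hasDerivAt_id' q).const_mul e).const_sub (c * p)).mul
      ((hasDerivAt_id' q).const_sub c)).congr_deriv (by ring)
  have hD : HasDerivAt (fun q => (c * p + e * q) * (c + q)) (e * (c + q) + (c * p + e * q)) q :=
    ((((hasDerivAt_id' q).const_mul e).const_add (c * p)).mul
      ((hasDerivAt_id' q).const_add c)).congr_deriv (by ring)
  exact (hN.div hD hB).congr_deriv (by ring)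

end

theorem mul_deriv_comp_sqrt_sq_add {f : ℝ → ℝ} {f' : ℝ} (x a : ℝ)
    (hf : HasDerivAt f f' √(x ^ 2 + a ^ 2)) :
    x * deriv (fun y => f √(y ^ 2 + a ^ 2)) x = x ^ 2 / √(x ^ 2 + a ^ 2) * f' := by
  rcases eq_or_ne (x ^ 2 + a ^ 2) 0 with h0 | h0
  · -- at the origin the speed is not differentiable, but the factor `x` vanishes
    have hx : x = 0 := by nlinarith [sq_nonneg x, sq_nonneg a]
    simp [hx]
  · have hs : HasDerivAt (fun y => y ^ 2 + a ^ 2) (2 * x) x := by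
      simpa using (hasDerivAt_pow 2 x).add_const (a ^ 2)
    have hsqrt : √(x ^ 2 + a ^ 2) ≠ 0 := by positivity
    have hcomp : HasDerivAt (fun y => f √(y ^ 2 + a ^ 2))
        (f' * (1 / (2 * √(x ^ 2 + a ^ 2)) * (2 * x))) x :=
      hf.comp x ((Real.hasDerivAt_sqrt h0).comp x hs)
    rw [hcomp.deriv]
    field_simp

theorem J3_invariant_general (c ρ u v p e : ℝ)
    (hq : Real.sqrt (u ^ 2 + v ^ 2) < c)
    (hden : (c * p + e * Real.sqrt (u ^ 2 + v ^ 2)) * (c + Real.sqrt (u ^ 2 + v ^ 2)) ≠ 0) :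
    -(ρ * e * (u ^ 2 + v ^ 2)) * (1 / (c ^ 2 - (u ^ 2 + v ^ 2))) *
        deriv (fun ρ' : ℝ => J3 c u v p e) ρ
      - p * u * deriv (fun u' => J3 c u' v p e) u
      - p * v * deriv (fun v' => J3 c u v' p e) v
      - p ^ 2 * deriv (fun p' => J3 c u v p' e) p
      + (c ^ 2 * p ^ 2 - e ^ 2 * (u ^ 2 + v ^ 2)) * (1 / (c ^ 2 - (u ^ 2 + v ^ 2))) *
        deriv (fun e' => J3 c u v p e') e = 0 := by
  have hswap (y : ℝ) : √(y ^ 2 + u ^ 2) = √(u ^ 2 + y ^ 2) := by rw [add_comm]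
  have hu := mul_deriv_comp_sqrt_sq_add u v (hasDerivAt_J3Speed_q hden)
  have hv := mul_deriv_comp_sqrt_sq_add v u (hasDerivAt_J3Speed_q (by rwa [hswap]))
  simp only [hswap, ← J3_eq_J3Speed] at hu hv
  set q := √(u ^ 2 + v ^ 2)
  have hq2 : u ^ 2 + v ^ 2 = q ^ 2 := (Real.sq_sqrt (by positivity)).symm
  have hq0 : 0 ≤ q := Real.sqrt_nonneg _
  have hcq : c ^ 2 - q ^ 2 ≠ 0 := by nlinarith
  have hspeed : u * deriv (fun u' => J3 c u' v p e) u + v * deriv (fun v' => J3 c u v' p e) v =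
      q * (-2 * c * (c ^ 2 * p ^ 2 - e ^ 2 * q ^ 2 + p * e * (c ^ 2 - q ^ 2)) /
        ((c * p + e * q) * (c + q)) ^ 2) := by
    rw [hu, hv, ← add_mul, ← add_div, hq2, sq, mul_self_div_self]
  simp only [J3_eq_J3Speed] at hspeed ⊢
  rw [deriv_const, (hasDerivAt_J3Speed_p hden).deriv, (hasDerivAt_J3Speed_e hden).deriv, hq2]
  linear_combination (norm := skip) (-p) * hspeed
  field_simp
  ring

theorem J3_invariant (c ρ u v p e : ℝ) (hc : 0 < c)
    (hq : Real.sqrt (u ^ 2 + v ^ 2) < c)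
    (hden : (c * p + e * Real.sqrt (u ^ 2 + v ^ 2)) * (c + Real.sqrt (u ^ 2 + v ^ 2)) ≠ 0) :
    -(ρ * e * (u ^ 2 + v ^ 2)) * (1 / (c ^ 2 - (u ^ 2 + v ^ 2))) *
        deriv (fun ρ' : ℝ => J3 c u v p e) ρ
      - p * u * deriv (fun u' => J3 c u' v p e) u
      - p * v * deriv (fun v' => J3 c u v' p e) v
      - p ^ 2 * deriv (fun p' => J3 c u v p' e) p
      + (c ^ 2 * p ^ 2 - e ^ 2 * (u ^ 2 + v ^ 2)) * (1 / (c ^ 2 - (u ^ 2 + v ^ 2))) *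
        deriv (fun e' => J3 c u v p e') e = 0 :=
  J3_invariant_general c ρ u v p e hq hden
end
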